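/- (Second test function in Theorem 2.2) Let (p_n) and (q_n) be sequences with 0 < q_n < p_n ≤ 1 for all n, lim_{n→∞} p_n = 1 and lim_{n→∞} q_n = 1. Then the sequence a_n = sup_{x ≥ 0} | L_n^{p_n,q_n}( (t/(1+t))²; x ) − (x/(1+x))² | converges statistically to 0. -/

import Mathlib

open Finset Filter
open scoped Classical

noncomputable section

/-- The `(p,q)`-integer `[n]_{p,q} = (p^n - q^n)/(p - q)`. -/
def pqInt (p q : ℝ) (n : ℕ) : ℝ := (p ^ n - q ^ n) / (p - q)

/-- The `(p,q)`-factorial. -/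
def pqFact (p q : ℝ) : ℕ → ℝ
  | 0 => 1
  | n + 1 => pqFact p q n * pqInt p q (n + 1)

/-- The `(p,q)`-binomial coefficient. -/
def pqBinom (p q : ℝ) (n k : ℕ) : ℝ :=
  pqFact p q n / (pqFact p q k * pqFact p q (n - k))

/-- `ℓ_n^{p,q}(x) = ∏_{s=0}^{n-1} (p^s + q^s x)`. -/
def pqEll (p q : ℝ) (n : ℕ) (x : ℝ) : ℝ :=
  ∏ s ∈ Finset.range n, (p ^ s + q ^ s * x)

/-- The node `p^{n-k+1}[k]_{p,q} / ([n-k+1]_{p,q} q^k)`. -/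
def pqNode (p q : ℝ) (n k : ℕ) : ℝ :=
  p ^ (n - k + 1) * pqInt p q k / (pqInt p q (n - k + 1) * q ^ k)

/-- The `(p,q)`-Bleimann–Butzer–Hahn operator. -/
def bbh (p q : ℝ) (n : ℕ) (f : ℝ → ℝ) (x : ℝ) : ℝ :=
  (p * q / pqEll p q n x) *
    ∑ k ∈ Finset.range (n + 1),
      f (pqNode p q n k) * p ^ ((n - k) * (n - k - 1) / 2) *
        q ^ (k * (k - 1) / 2) * pqBinom p q n k * x ^ k

/-- `δ_n(x)` from Theorem 3.1. -/
def pqDelta (p q : ℝ) (n : ℕ) (x : ℝ) : ℝ :=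
  (x / (1 + x)) ^ 2 *
      (p ^ 2 * q ^ 3 * pqInt p q n * pqInt p q (n - 1) / (pqInt p q (n + 1)) ^ 2 *
          ((1 + x) / (p + q * x)) -
        2 * p * q * pqInt p q n / pqInt p q (n + 1) + 1) +
    p ^ (n + 2) * q * pqInt p q n / (pqInt p q (n + 1)) ^ 2 * (x / (1 + x))

/-- Statistical convergence of a real sequence. -/
def StatConv (a : ℕ → ℝ) (l : ℝ) : Prop :=
  ∀ ε > (0 : ℝ), Tendsto (fun n : ℕ =>
    (((Finset.range (n + 1)).filter (fun k => ε ≤ |a k - l|)).card : ℝ) / n)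
    atTop (nhds 0)

/-- A modulus of continuity. -/
def IsModulus (ω : ℝ → ℝ) : Prop :=
  (∀ δ, 0 ≤ δ → 0 ≤ ω δ) ∧
  (∀ δ₁ δ₂, 0 ≤ δ₁ → δ₁ ≤ δ₂ → ω δ₁ ≤ ω δ₂) ∧
  (∀ δ₁ δ₂, 0 ≤ δ₁ → 0 ≤ δ₂ → ω (δ₁ + δ₂) ≤ ω δ₁ + ω δ₂) ∧
  Tendsto ω (nhdsWithin 0 (Set.Ioi 0)) (nhds 0)

/-- Membership in the class `H_ω`. -/
def MemHomega (ω f : ℝ → ℝ) : Prop :=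
  ∀ x y : ℝ, 0 ≤ x → 0 ≤ y → |f x - f y| ≤ ω |x / (1 + x) - y / (1 + y)|

/-- The modulus `ω̃(f; δ)`. -/
def omegaTilde (f : ℝ → ℝ) (δ : ℝ) : ℝ :=
  sSup {d | ∃ t x : ℝ, 0 ≤ t ∧ 0 ≤ x ∧ |t / (1 + t) - x / (1 + x)| ≤ δ ∧ d = |f t - f x|}

/-- The bivariate `(p,q)`-Bleimann–Butzer–Hahn operator. -/
def bbh2 (p₁ p₂ q₁ q₂ : ℝ) (n₁ n₂ : ℕ) (f : ℝ → ℝ → ℝ) (x y : ℝ) : ℝ :=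
  (p₁ * p₂ * q₁ * q₂ / (pqEll p₁ q₁ n₁ x * pqEll p₂ q₂ n₂ y)) *
    ∑ k₁ ∈ Finset.range (n₁ + 1), ∑ k₂ ∈ Finset.range (n₂ + 1),
      f (pqNode p₁ q₁ n₁ k₁) (pqNode p₂ q₂ n₂ k₂) *
        p₁ ^ ((n₁ - k₁) * (n₁ - k₁ - 1) / 2) * q₁ ^ (k₁ * (k₁ - 1) / 2) *
        p₂ ^ ((n₂ - k₂) * (n₂ - k₂ - 1) / 2) * q₂ ^ (k₂ * (k₂ - 1) / 2) *
        pqBinom p₁ q₁ n₁ k₁ * pqBinom p₂ q₂ n₂ k₂ * x ^ k₁ * y ^ k₂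

/-- Statistical convergence of a double real sequence (Pringsheim sense). -/
def StatConv2 (a : ℕ → ℕ → ℝ) (l : ℝ) : Prop :=
  ∀ ε > (0 : ℝ), Tendsto (fun N : ℕ × ℕ =>
    ((((Finset.range (N.1 + 1)) ×ˢ (Finset.range (N.2 + 1))).filter
        (fun jk => ε ≤ |a jk.1 jk.2 - l|)).card : ℝ) / (N.1 * N.2))
    atTop (nhds 0)

/-- A bivariate modulus of continuity. -/
def IsModulus2 (ω : ℝ → ℝ → ℝ) : Prop :=
  (∀ a b, 0 ≤ a → 0 ≤ b → 0 ≤ ω a b) ∧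
  (∀ a a' b, 0 ≤ a → a ≤ a' → 0 ≤ b → ω a b ≤ ω a' b) ∧
  (∀ a b b', 0 ≤ a → 0 ≤ b → b ≤ b' → ω a b ≤ ω a b') ∧
  (∀ a a' b, 0 ≤ a → 0 ≤ a' → 0 ≤ b → ω (a + a') b ≤ ω a b + ω a' b) ∧
  (∀ a b b', 0 ≤ a → 0 ≤ b → 0 ≤ b' → ω a (b + b') ≤ ω a b + ω a b') ∧
  Tendsto (fun d : ℝ × ℝ => ω d.1 d.2)
    (nhdsWithin (0, 0) (Set.Ioi 0 ×ˢ Set.Ioi 0)) (nhds 0)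

/-- Membership in the class `H_{ω₂}`. -/
def MemHomega2 (ω g : ℝ → ℝ → ℝ) : Prop :=
  ∀ u₁ v₁ u₂ v₂ : ℝ, 0 ≤ u₁ → 0 ≤ v₁ → 0 ≤ u₂ → 0 ≤ v₂ →
    |g u₁ v₁ - g u₂ v₂| ≤
      ω |u₁ / (1 + u₁) - u₂ / (1 + u₂)| |v₁ / (1 + v₁) - v₂ / (1 + v₂)|

/-- The bivariate modulus `ω̃(g; δ₁, δ₂)`. -/
def omegaTilde2 (g : ℝ → ℝ → ℝ) (δ₁ δ₂ : ℝ) : ℝ :=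
  sSup {d | ∃ t s x y : ℝ, 0 ≤ t ∧ 0 ≤ s ∧ 0 ≤ x ∧ 0 ≤ y ∧
    |t / (1 + t) - x / (1 + x)| ≤ δ₁ ∧ |s / (1 + s) - y / (1 + y)| ≤ δ₂ ∧
    d = |g t s - g x y|}

/-!
Since `t/(1+t)` at the node `t_k` equals `p^{n-k+1}[k]/[n+1]`, the operator applied to
`(t/(1+t))²` is a sum over `k` of `[k]²` times the `(p,q)`-binomial weights. Absorbing the two
factors `[k]` into the binomial coefficients and summing by the `(p,q)`-binomial theorem gives
`L_n((t/(1+t))²; x) = c₂ x/(1+x) + c₁ x²/((1+x)(p+qx))`, whose coefficients are rational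
functions of `p`, `q` and `r = p^n/[n]`. Since `x²/((1+x)(p+qx))` lies between `(x/(1+x))²`
and `(x/(1+x))²/q`, the error is bounded uniformly in `x` by a quantity tending to `0` as
`p, q → 1` and `r → 0`; and `r → 0` because `[n] ≥ m p^{n-1} q^{m-1}` for every fixed
`m ≤ n`. So the sequence of suprema converges to `0`, hence also statistically.
-/

open Topology

section PQInt

variable {p q : ℝ}

lemma pqInt_zero : pqInt p q 0 = 0 := by simp [pqInt]

lemma pqInt_eq_sum (h : p ≠ q) (n : ℕ) :
    pqInt p q n = ∑ i ∈ range n, p ^ i * q ^ (n - 1 - i) := by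
  rw [pqInt, ← geom_sum₂_mul p q n, mul_div_assoc, div_self (sub_ne_zero.2 h), mul_one]

lemma pqInt_add (h : p ≠ q) (a b : ℕ) :
    pqInt p q (a + b) = p ^ a * pqInt p q b + q ^ b * pqInt p q a := by
  have : p - q ≠ 0 := sub_ne_zero.2 h
  simp only [pqInt, pow_add]
  field_simp
  ring

lemma pqInt_succ (h : p ≠ q) (n : ℕ) : pqInt p q (n + 1) = p ^ n + q * pqInt p q n := by
  have : p - q ≠ 0 := sub_ne_zero.2 h
  simp only [pqInt, pow_succ]
  field_simp
  ring

lemma pqInt_pos (hq : 0 < q) (hqp : q < p) {n : ℕ} (hn : 0 < n) : 0 < pqInt p q n := by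
  rw [pqInt_eq_sum hqp.ne']
  exact sum_pos (fun i _ => by have := hq.trans hqp; positivity) (nonempty_range_iff.2 hn.ne')

lemma pqInt_nonneg (hq : 0 < q) (hqp : q < p) (n : ℕ) : 0 ≤ pqInt p q n := by
  rcases n.eq_zero_or_pos with rfl | hn
  · exact pqInt_zero.ge
  · exact (pqInt_pos hq hqp hn).le

end PQInt

section PQBinom

variable {p q : ℝ}

lemma pqFact_pos (hq : 0 < q) (hqp : q < p) (n : ℕ) : 0 < pqFact p q n := by
  induction n with
  | zero => exact one_pos
  | succ n ih => exact mul_pos ih (pqInt_pos hq hqp n.succ_pos)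

lemma pqBinom_zero_right (hq : 0 < q) (hqp : q < p) (n : ℕ) : pqBinom p q n 0 = 1 := by
  simp [pqBinom, pqFact, (pqFact_pos hq hqp n).ne']

lemma pqBinom_self (hq : 0 < q) (hqp : q < p) (n : ℕ) : pqBinom p q n n = 1 := by
  simp [pqBinom, pqFact, (pqFact_pos hq hqp n).ne']

lemma pqInt_mul_pqBinom (hq : 0 < q) (hqp : q < p) (n k : ℕ) :
    pqInt p q (k + 1) * pqBinom p q (n + 1) (k + 1) = pqInt p q (n + 1) * pqBinom p q n k := by
  have := (pqFact_pos hq hqp k).ne'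
  have := (pqFact_pos hq hqp (n - k)).ne'
  have := (pqInt_pos hq hqp k.succ_pos).ne'
  simp only [pqBinom, Nat.add_sub_add_right, pqFact]
  field_simp

lemma pqBinom_succ_succ (hq : 0 < q) (hqp : q < p) {n k : ℕ} (hk : k < n) :
    pqBinom p q (n + 1) (k + 1) =
      p ^ (k + 1) * pqBinom p q n (k + 1) + q ^ (n - k) * pqBinom p q n k := by
  obtain ⟨b, rfl⟩ : ∃ b, n = k + b + 1 := ⟨n - k - 1, by omega⟩
  have := (pqFact_pos hq hqp k).ne'
  have := (pqFact_pos hq hqp b).ne'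
  have := (pqFact_pos hq hqp (k + b + 1)).ne'
  have := (pqInt_pos hq hqp k.succ_pos).ne'
  have := (pqInt_pos hq hqp b.succ_pos).ne'
  have hsplit : pqInt p q (k + b + 1 + 1) =
      p ^ (k + 1) * pqInt p q (b + 1) + q ^ (b + 1) * pqInt p q (k + 1) := by
    rw [← pqInt_add hqp.ne', show k + 1 + (b + 1) = k + b + 1 + 1 by ring]
  simp only [pqBinom, show k + b + 1 + 1 - (k + 1) = b + 1 by omega,
    show k + b + 1 - (k + 1) = b by omega, show k + b + 1 - k = b + 1 by omega, pqFact, hsplit]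
  field_simp

end PQBinom

lemma Nat.succ_mul_div_two (n : ℕ) : (n + 1) * n / 2 = n + n * (n - 1) / 2 := by
  simpa [Nat.choose_two_right] using Nat.choose_succ_succ' n 1

section Gauss

variable {p q : ℝ}

def pqWeight (p q : ℝ) (t n k : ℕ) : ℝ :=
  p ^ (t * (n - k) + (n - k) * (n - k - 1) / 2) * q ^ (t * k + k * (k - 1) / 2) *
    pqBinom p q n k

lemma pqWeight_succ_zero (hq : 0 < q) (hqp : q < p) (t n : ℕ) :
    pqWeight p q t (n + 1) 0 = p ^ (n + t) * pqWeight p q t n 0 := by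
  simp only [pqWeight, pqBinom_zero_right hq hqp, Nat.sub_zero, Nat.add_sub_cancel,
    Nat.succ_mul_div_two]
  ring

lemma pqWeight_succ_self (hq : 0 < q) (hqp : q < p) (t n : ℕ) :
    pqWeight p q t (n + 1) (n + 1) = q ^ (n + t) * pqWeight p q t n n := by
  simp only [pqWeight, pqBinom_self hq hqp, Nat.sub_self, Nat.add_sub_cancel,
    Nat.succ_mul_div_two]
  ring

lemma pqWeight_succ_succ (hq : 0 < q) (hqp : q < p) (t : ℕ) {n k : ℕ} (hk : k < n) :
    pqWeight p q t (n + 1) (k + 1) =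
      p ^ (n + t) * pqWeight p q t n (k + 1) + q ^ (n + t) * pqWeight p q t n k := by
  obtain ⟨b, rfl⟩ : ∃ b, n = k + b + 1 := ⟨n - k - 1, by omega⟩
  simp only [pqWeight, pqBinom_succ_succ hq hqp hk, show k + b + 1 + 1 - (k + 1) = b + 1 by omega,
    show k + b + 1 - (k + 1) = b by omega, show k + b + 1 - k = b + 1 by omega,
    Nat.add_sub_cancel, Nat.succ_mul_div_two]
  ring

/-- The `(p,q)`-binomial theorem. -/
theorem sum_pqWeight_mul_pow (hq : 0 < q) (hqp : q < p) (t n : ℕ) (x : ℝ) :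
    ∑ k ∈ range (n + 1), pqWeight p q t n k * x ^ k =
      ∏ s ∈ range n, (p ^ (s + t) + q ^ (s + t) * x) := by
  induction n with
  | zero => simp [pqWeight, pqBinom_zero_right hq hqp]
  | succ n ih =>
    have hmid : ∀ k ∈ range n, pqWeight p q t (n + 1) (k + 1) * x ^ (k + 1) =
        p ^ (n + t) * (pqWeight p q t n (k + 1) * x ^ (k + 1)) +
          q ^ (n + t) * x * (pqWeight p q t n k * x ^ k) := fun k hk => by
      rw [pqWeight_succ_succ hq hqp t (mem_range.1 hk)]
      ring
    rw [prod_range_succ, ← ih, sum_range_succ', sum_range_succ, sum_congr rfl hmid,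
      sum_add_distrib, ← mul_sum, ← mul_sum, pqWeight_succ_zero hq hqp,
      pqWeight_succ_self hq hqp]
    linear_combination -p ^ (n + t) * sum_range_succ' (fun k => pqWeight p q t n k * x ^ k) n -
      q ^ (n + t) * x * sum_range_succ (fun k => pqWeight p q t n k * x ^ k) n

end Gauss

section SecondMoment

variable {p q : ℝ}

lemma pqNode_div_one_add (hq : 0 < q) (hqp : q < p) {n k : ℕ} (hk : k ≤ n) :
    pqNode p q n k / (1 + pqNode p q n k) =
      p ^ (n - k + 1) * pqInt p q k / pqInt p q (n + 1) := by
  have hsplit : pqInt p q (n + 1) =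
      p ^ (n - k + 1) * pqInt p q k + q ^ k * pqInt p q (n - k + 1) := by
    rw [← pqInt_add hqp.ne', show n - k + 1 + k = n + 1 by omega]
  have hden : 0 < pqInt p q (n - k + 1) * q ^ k :=
    mul_pos (pqInt_pos hq hqp (n - k).succ_pos) (pow_pos hq k)
  rw [pqNode, one_add_div hden.ne', div_div_div_cancel_right₀ hden.ne', hsplit]
  ring

lemma sum_pqInt_mul_pqBinom (hq : 0 < q) (hqp : q < p) (n : ℕ) (F : ℕ → ℝ) :
    ∑ k ∈ range (n + 2), pqInt p q k * pqBinom p q (n + 1) k * F k =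
      pqInt p q (n + 1) * ∑ k ∈ range (n + 1), pqBinom p q n k * F (k + 1) := by
  rw [sum_range_succ', pqInt_zero, zero_mul, zero_mul, add_zero, mul_sum]
  refine sum_congr rfl fun k _ => ?_
  rw [← mul_assoc, ← pqInt_mul_pqBinom hq hqp]

lemma sum_sq_mul_pqWeight (hq : 0 < q) (hqp : q < p) (m : ℕ) (x : ℝ) :
    ∑ k ∈ range (m + 3),
        (p ^ (m + 2 - k + 1) * pqInt p q k) ^ 2 * pqWeight p q 0 (m + 2) k * x ^ k =
      pqInt p q (m + 2) * p ^ (m + 3) * x *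
          ∏ s ∈ range (m + 1), (p ^ (s + 1) + q ^ (s + 1) * x) +
        pqInt p q (m + 2) * pqInt p q (m + 1) * p ^ 2 * q ^ 2 * x ^ 2 *
          ∏ s ∈ range m, (p ^ (s + 2) + q ^ (s + 2) * x) := by
  set H : ℕ → ℝ := fun k => p ^ (2 * (m + 3 - k)) * p ^ ((m + 2 - k) * (m + 2 - k - 1) / 2) *
    q ^ (k * (k - 1) / 2) * x ^ k with hH
  have first : ∀ j ∈ range (m + 2), pqBinom p q (m + 1) j * (p ^ j * H (j + 1)) =
      p ^ (m + 3) * x * (pqWeight p q 1 (m + 1) j * x ^ j) := fun j hj => by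
    have hj := mem_range.1 hj
    simp only [hH, pqWeight, show m + 3 - (j + 1) = m + 1 - j + 1 by omega,
      show m + 2 - (j + 1) = m + 1 - j by omega, Nat.add_sub_cancel, Nat.succ_mul_div_two]
    rw [show m + 3 = m + 1 - j + j + 2 by omega]
    generalize m + 1 - j = b
    ring
  have second : ∀ i ∈ range (m + 1), pqBinom p q m i * H (i + 2) =
      p ^ 2 * q * x ^ 2 * (pqWeight p q 2 m i * x ^ i) := fun i hi => by
    obtain ⟨b, rfl⟩ : ∃ b, m = i + b := ⟨m - i, by have := mem_range.1 hi; omega⟩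
    simp only [hH, pqWeight, show i + b + 3 - (i + 2) = b + 1 by omega,
      show i + b + 2 - (i + 2) = b by omega, Nat.add_sub_cancel, Nat.add_sub_cancel_left,
      show i + 2 = i + 1 + 1 from rfl, Nat.succ_mul_div_two]
    ring
  calc _ = ∑ k ∈ range (m + 3), pqInt p q k * pqBinom p q (m + 2) k * (pqInt p q k * H k) := by
        refine sum_congr rfl fun k hk => ?_
        have hk := mem_range.1 hk
        simp only [hH, pqWeight, zero_mul, zero_add]
        rw [show 2 * (m + 3 - k) = 2 * (m + 2 - k + 1) by omega, pow_mul']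
        ring
    _ = pqInt p q (m + 2) *
          (∑ j ∈ range (m + 2), pqBinom p q (m + 1) j * (p ^ j * H (j + 1)) +
            q * ∑ j ∈ range (m + 2), pqInt p q j * pqBinom p q (m + 1) j * H (j + 1)) := by
        rw [sum_pqInt_mul_pqBinom hq hqp]
        congr 1
        rw [mul_sum, ← sum_add_distrib]
        refine sum_congr rfl fun j _ => ?_
        rw [pqInt_succ hqp.ne']
        ring
    _ = _ := by
        rw [sum_pqInt_mul_pqBinom hq hqp, sum_congr rfl first, sum_congr rfl second, ← mul_sum,
          ← mul_sum, sum_pqWeight_mul_pow hq hqp, sum_pqWeight_mul_pow hq hqp]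
        ring

theorem bbh_sq_eq (hq : 0 < q) (hqp : q < p) {n : ℕ} (hn : 2 ≤ n) {x : ℝ} (hx : 0 ≤ x) :
    bbh p q n (fun t => (t / (1 + t)) ^ 2) x =
      p ^ (n + 2) * q * pqInt p q n / pqInt p q (n + 1) ^ 2 * (x / (1 + x)) +
        p ^ 3 * q ^ 3 * pqInt p q n * pqInt p q (n - 1) / pqInt p q (n + 1) ^ 2 *
          (x ^ 2 / ((1 + x) * (p + q * x))) := by
  obtain ⟨m, rfl⟩ : ∃ m, n = m + 2 := ⟨n - 2, by omega⟩
  have hp := hq.trans hqp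
  have hterm : ∀ k ∈ range (m + 2 + 1),
      (pqNode p q (m + 2) k / (1 + pqNode p q (m + 2) k)) ^ 2 *
          p ^ ((m + 2 - k) * (m + 2 - k - 1) / 2) * q ^ (k * (k - 1) / 2) *
          pqBinom p q (m + 2) k * x ^ k =
      (p ^ (m + 2 - k + 1) * pqInt p q k) ^ 2 * pqWeight p q 0 (m + 2) k * x ^ k /
        pqInt p q (m + 3) ^ 2 := fun k hk => by
    rw [pqNode_div_one_add hq hqp (mem_range_succ_iff.1 hk), pqWeight]
    ring
  have hell : pqEll p q (m + 2) x =
      (1 + x) * ((p + q * x) * ∏ s ∈ range m, (p ^ (s + 2) + q ^ (s + 2) * x)) := by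
    rw [pqEll, prod_range_succ', prod_range_succ']
    ring
  have hprod : ∏ s ∈ range (m + 1), (p ^ (s + 1) + q ^ (s + 1) * x) =
      (p + q * x) * ∏ s ∈ range m, (p ^ (s + 2) + q ^ (s + 2) * x) := by
    rw [prod_range_succ']
    ring
  have hprod_pos : 0 < ∏ s ∈ range m, (p ^ (s + 2) + q ^ (s + 2) * x) :=
    prod_pos fun s _ => by positivity
  have hI := (pqInt_pos hq hqp (m + 2).succ_pos).ne'
  rw [bbh, sum_congr rfl hterm, ← sum_div, sum_sq_mul_pqWeight hq hqp, hell, hprod,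
    show m + 2 - 1 = m + 1 from rfl]
  field_simp
  ring

end SecondMoment

section Estimate

variable {p q : ℝ}

lemma pow_mul_pqInt_div_pqInt_succ_sq (hq : 0 < q) (hqp : q < p) {n : ℕ} (hn : 0 < n) :
    p ^ (n + 2) * q * pqInt p q n / pqInt p q (n + 1) ^ 2 =
      p ^ 2 * q * (p ^ n / pqInt p q n) / (p ^ n / pqInt p q n + q) ^ 2 := by
  have hI := (pqInt_pos hq hqp hn).ne'
  have hp := (hq.trans hqp).ne'
  rw [pqInt_succ hqp.ne']
  field_simp
  ring

lemma pow_mul_pqInt_mul_pqInt_pred_div_pqInt_succ_sq (hq : 0 < q) (hqp : q < p) {n : ℕ}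
    (hn : 0 < n) :
    p ^ 3 * q ^ 3 * pqInt p q n * pqInt p q (n - 1) / pqInt p q (n + 1) ^ 2 =
      p ^ 2 * q ^ 2 * (p - p ^ n / pqInt p q n) / (p ^ n / pqInt p q n + q) ^ 2 := by
  obtain ⟨m, rfl⟩ : ∃ m, n = m + 1 := ⟨n - 1, by omega⟩
  have hI := pqInt_pos hq hqp hn
  have hp := hq.trans hqp
  have hden : p ^ (m + 1) / pqInt p q (m + 1) + q ≠ 0 := by positivity
  have hq' := hq.ne'
  have hprev : q * pqInt p q m = pqInt p q (m + 1) - p ^ m := by rw [pqInt_succ hqp.ne']; ring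
  rw [pqInt_succ hqp.ne' (m + 1), Nat.add_sub_cancel]
  field_simp
  linear_combination p * hprev

lemma abs_moment_sub_sq_le {c₁ c₂ x : ℝ} (hq : 0 < q) (hqp : q ≤ p) (hp : p ≤ 1)
    (hc₁ : 0 ≤ c₁) (hc₂ : 0 ≤ c₂) (hx : 0 ≤ x) :
    |c₂ * (x / (1 + x)) + c₁ * (x ^ 2 / ((1 + x) * (p + q * x))) - (x / (1 + x)) ^ 2| ≤
      c₂ + |c₁ - 1| + |c₁ / q - 1| := by
  have hpqx : 0 < p + q * x := by nlinarith
  set u := x / (1 + x)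
  set A := x ^ 2 / ((1 + x) * (p + q * x))
  have hu₀ : 0 ≤ u := by positivity
  have hu₁ : u ≤ 1 := div_le_one_of_le₀ (by linarith) (by linarith)
  have hA₀ : 0 ≤ A := by positivity
  have hA : u ^ 2 = A * ((p + q * x) / (1 + x)) := by
    simp only [u, A]
    field_simp
    exact (mul_div_cancel_right₀ _ (by nlinarith)).symm
  -- `u² ≤ A ≤ u²/q` because `q (1 + x) ≤ p + q x ≤ 1 + x`
  have hlow : u ^ 2 ≤ A := by
    rw [hA]
    exact mul_le_of_le_one_right hA₀ (div_le_one_of_le₀ (by nlinarith) (by linarith))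
  have hupp : A ≤ u ^ 2 / q := by
    rw [hA, le_div_iff₀ hq]
    exact mul_le_mul_of_nonneg_left ((le_div_iff₀ (by linarith)).2 (by nlinarith)) hA₀
  have hu₂ : u ^ 2 ≤ 1 := pow_le_one₀ hu₀ hu₁
  have hsq₀ : 0 ≤ u ^ 2 := sq_nonneg u
  rw [abs_le]
  constructor
  · have : -|c₁ - 1| ≤ (c₁ - 1) * u ^ 2 := by
      nlinarith [neg_abs_le (c₁ - 1), abs_nonneg (c₁ - 1)]
    nlinarith [mul_le_mul_of_nonneg_left hlow hc₁, mul_nonneg hc₂ hu₀,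
      abs_nonneg (c₁ / q - 1)]
  · have : (c₁ / q - 1) * u ^ 2 ≤ |c₁ / q - 1| := by
      nlinarith [le_abs_self (c₁ / q - 1), abs_nonneg (c₁ / q - 1)]
    have : c₁ * A ≤ c₁ / q * u ^ 2 := by
      calc c₁ * A ≤ c₁ * (u ^ 2 / q) := mul_le_mul_of_nonneg_left hupp hc₁
        _ = c₁ / q * u ^ 2 := by ring
    nlinarith [mul_le_mul_of_nonneg_left hu₁ hc₂, abs_nonneg (c₁ - 1)]

/-- The bound on `|L_n^{p,q}((t/(1+t))²; x) - (x/(1+x))²|`, in terms of `r = p^n/[n]_{p,q}`. -/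
def secondMomentBound (p q r : ℝ) : ℝ :=
  p ^ 2 * q * r / (r + q) ^ 2 + |p ^ 2 * q ^ 2 * (p - r) / (r + q) ^ 2 - 1| +
    |p ^ 2 * q ^ 2 * (p - r) / (r + q) ^ 2 / q - 1|

theorem abs_bbh_sq_sub_le (hq : 0 < q) (hqp : q < p) (hp : p ≤ 1) {n : ℕ} (hn : 2 ≤ n)
    {x : ℝ} (hx : 0 ≤ x) :
    |bbh p q n (fun t => (t / (1 + t)) ^ 2) x - (x / (1 + x)) ^ 2| ≤
      secondMomentBound p q (p ^ n / pqInt p q n) := by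
  have := pqInt_pos hq hqp (by omega : 0 < n)
  have := pqInt_pos hq hqp (by omega : 0 < n - 1)
  have := pqInt_pos hq hqp (by omega : 0 < n + 1)
  have := hq.trans hqp
  rw [bbh_sq_eq hq hqp hn hx, secondMomentBound,
    ← pow_mul_pqInt_div_pqInt_succ_sq hq hqp (by omega),
    ← pow_mul_pqInt_mul_pqInt_pred_div_pqInt_succ_sq hq hqp (by omega)]
  exact abs_moment_sub_sq_le hq hqp.le hp (by positivity) (by positivity) hx

end Estimate

section Limits

variable {p q : ℝ}

lemma pqInt_comm (n : ℕ) : pqInt p q n = pqInt q p n := by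
  rw [pqInt, pqInt, ← neg_div_neg_eq, neg_sub, neg_sub]

lemma le_pqInt (hq : 0 < q) (hqp : q < p) (hp : p ≤ 1) {m n : ℕ} (hmn : m ≤ n) :
    m * (p ^ (n - 1) * q ^ (m - 1)) ≤ pqInt p q n := by
  have hp₀ := hq.trans hqp
  rw [pqInt_comm, pqInt_eq_sum hqp.ne]
  calc m * (p ^ (n - 1) * q ^ (m - 1)) = ∑ _i ∈ range m, p ^ (n - 1) * q ^ (m - 1) := by simp
    _ ≤ ∑ i ∈ range m, q ^ i * p ^ (n - 1 - i) := sum_le_sum fun i hi => by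
        have := mem_range.1 hi
        rw [mul_comm]
        exact mul_le_mul (pow_le_pow_of_le_one hq.le (hqp.le.trans hp) (by omega))
          (pow_le_pow_of_le_one hp₀.le hp (by omega)) (by positivity) (by positivity)
    _ ≤ ∑ i ∈ range n, q ^ i * p ^ (n - 1 - i) :=
        sum_le_sum_of_subset_of_nonneg (range_subset_range.2 hmn) fun i _ _ => by positivity

lemma pow_div_pqInt_le (hq : 0 < q) (hqp : q < p) (hp : p ≤ 1) {m n : ℕ} (hm : 0 < m)
    (hmn : m ≤ n) : p ^ n / pqInt p q n ≤ 1 / (m * q ^ (m - 1)) := by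
  have hp₀ := hq.trans hqp
  rw [div_le_div_iff₀ (pqInt_pos hq hqp (hm.trans_le hmn)) (by positivity), one_mul]
  calc p ^ n * (m * q ^ (m - 1)) ≤ p ^ (n - 1) * (m * q ^ (m - 1)) :=
        mul_le_mul_of_nonneg_right (pow_le_pow_of_le_one hp₀.le hp (by omega)) (by positivity)
    _ = m * (p ^ (n - 1) * q ^ (m - 1)) := by ring
    _ ≤ pqInt p q n := le_pqInt hq hqp hp hmn

end Limits

theorem tendsto_pow_div_pqInt {p q : ℕ → ℝ} (hq : ∀ n, 0 < q n) (hqp : ∀ n, q n < p n)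
    (hp : ∀ n, p n ≤ 1) (hql : Tendsto q atTop (𝓝 1)) :
    Tendsto (fun n => p n ^ n / pqInt (p n) (q n) n) atTop (𝓝 0) := by
  refine tendsto_order.2
    ⟨fun a ha => Eventually.of_forall fun n => ha.trans_le ?_, fun ε hε => ?_⟩
  · have := (hq n).trans (hqp n)
    exact div_nonneg (by positivity) (pqInt_nonneg (hq n) (hqp n) n)
  obtain ⟨m, hm⟩ := exists_nat_gt (2 / ε)
  have hm₀ : (0 : ℝ) < m := (by positivity : (0 : ℝ) < 2 / ε).trans hm
  have hqm : ∀ᶠ n in atTop, 1 / 2 < q n ^ (m - 1) :=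
    (hql.pow (m - 1)).eventually (lt_mem_nhds (by norm_num))
  filter_upwards [hqm, eventually_ge_atTop m] with n hqn hmn
  calc p n ^ n / pqInt (p n) (q n) n ≤ 1 / (m * q n ^ (m - 1)) :=
        pow_div_pqInt_le (hq n) (hqp n) (hp n) (by exact_mod_cast hm₀) hmn
    _ < 1 / (m * (1 / 2)) := one_div_lt_one_div_of_lt (by positivity) (by gcongr)
    _ = 2 / m := by ring
    _ < ε := (div_lt_iff₀ hm₀).2 (by rwa [div_lt_iff₀ hε, mul_comm] at hm)

theorem tendsto_secondMomentBound {ι : Type*} {l : Filter ι} {p q r : ι → ℝ}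
    (hp : Tendsto p l (𝓝 1)) (hq : Tendsto q l (𝓝 1)) (hr : Tendsto r l (𝓝 0)) :
    Tendsto (fun i => secondMomentBound (p i) (q i) (r i)) l (𝓝 0) := by
  have hden := (hr.add hq).pow 2
  have h₁ := (((hp.pow 2).mul hq).mul hr).div hden (by norm_num)
  have h₂ := (((hp.pow 2).mul (hq.pow 2)).mul (hp.sub hr)).div hden (by norm_num)
  have h₃ := h₂.div hq (by norm_num)
  simpa [secondMomentBound] using (h₁.add (h₂.sub_const 1).abs).add (h₃.sub_const 1).abs

theorem Filter.Tendsto.statConv {a : ℕ → ℝ} {l : ℝ} (h : Tendsto a atTop (𝓝 l)) :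
    StatConv a l := by
  intro ε hε
  obtain ⟨N, hN⟩ := eventually_atTop.1 (Metric.tendsto_nhds.1 h ε hε)
  have hcard (n : ℕ) :
      (((range (n + 1)).filter (fun k => ε ≤ |a k - l|)).card : ℝ) ≤ N := by
    have hsub : (range (n + 1)).filter (fun k => ε ≤ |a k - l|) ⊆ range N := fun k hk => by
      by_contra hkN
      have := hN k (not_lt.1 (mem_range.not.1 hkN))
      rw [Real.dist_eq] at this
      exact (mem_filter.1 hk).2.not_gt this
    exact_mod_cast (card_le_card hsub).trans (card_range N).le
  exact squeeze_zero (fun n => by positivity)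
    (fun n => div_le_div_of_nonneg_right (hcard n) (Nat.cast_nonneg n))
    (tendsto_const_div_atTop_nhds_zero_nat (N : ℝ))

/-- statistical convergence for the second test function. -/
theorem bbh_statConv_second_test (p q : ℕ → ℝ)
    (hq : ∀ n, 0 < q n) (hqp : ∀ n, q n < p n) (hp : ∀ n, p n ≤ 1)
    (hpl : Tendsto p atTop (nhds 1)) (hql : Tendsto q atTop (nhds 1)) :
    StatConv (fun n : ℕ =>
      ⨆ x : {t : ℝ // 0 ≤ t},
        |bbh (p n) (q n) n (fun t => (t / (1 + t)) ^ 2) x.1 -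
          (x.1 / (1 + x.1)) ^ 2|) 0 := by
  have : Nonempty {t : ℝ // 0 ≤ t} := ⟨⟨0, le_rfl⟩⟩
  refine Tendsto.statConv (squeeze_zero' ?_ ?_
    (tendsto_secondMomentBound hpl hql (tendsto_pow_div_pqInt hq hqp hp hql)))
  · exact Eventually.of_forall fun n => Real.iSup_nonneg fun _ => abs_nonneg _
  · filter_upwards [eventually_ge_atTop 2] with n hn
    exact ciSup_le fun x => abs_bbh_sq_sub_le (hq n) (hqp n) (hp n) hn x.2
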